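/- Let p ∈ (0,1), q_{11}, q_{12}, q_{21}, q_{22} ≥ 0 with (q_{11} − q_{12})(q_{21} − q_{22}) > 0, and let σ_1, σ_2 ≥ 0 be such that h_1 = p q_{11} + (1−p) q_{12} − σ_1 = 0 and h_2 = p q_{21} + (1−p) q_{22} − σ_2 = 0, and let σ_{12} ≤ σ_1 σ_2. Then setting h = p q_{11} q_{21} + (1−p) q_{12} q_{22} − σ_{12}, we have h + h_1 + h_2 > 0. -/
import Mathlib

/-- Boundary case `h₁ = h₂ = 0`: the GCCA optimality quantity
`h + h₁ + h₂` is strictly positive. -/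
theorem stmt19 (p q11 q12 q21 q22 σ1 σ2 σ12 : ℝ)
    (hp0 : 0 < p) (hp1 : p < 1)
    (h11 : 0 ≤ q11) (h12 : 0 ≤ q12) (h21 : 0 ≤ q21) (h22 : 0 ≤ q22)
    (hord : (q11 - q12) * (q21 - q22) > 0)
    (hσ1 : 0 ≤ σ1) (hσ2 : 0 ≤ σ2)
    (hh1 : p * q11 + (1 - p) * q12 - σ1 = 0)
    (hh2 : p * q21 + (1 - p) * q22 - σ2 = 0)
    (hσ12 : σ12 ≤ σ1 * σ2) :
    (p * q11 * q21 + (1 - p) * q12 * q22 - σ12)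
      + (p * q11 + (1 - p) * q12 - σ1) + (p * q21 + (1 - p) * q22 - σ2) > 0 := by
  nlinarith [mul_pos (mul_pos hp0 (sub_pos.mpr hp1)) hord]
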